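/- arXiv:2003.05764 — 5 statements merged into one kernel-verified Lean document; each statement's English description precedes it below -/
import Mathlib

section
/- Let 𝔲 = 𝔲₋₁ ⊕ 𝔲₀ ⊕ 𝔲₁ be a ℤ-graded semisimple Lie algebra over a field F of characteristic 0 such that 𝔲₁ is a simple 𝔲₀-module under the bracket action. Then the Lie subalgebra 𝔲' generated by 𝔲₁ and 𝔲₋₁ equals 𝔲₋₁ ⊕ [𝔲₋₁, 𝔲₁] ⊕ 𝔲₁ and is a simple Lie algebra. -/
/-!
The subspace `Um ⊔ ⁅Um, Up⁆ ⊔ Up` is stable under bracketing with each graded piece, so it is an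
ideal of `L`, and it is the Lie subalgebra generated by `Um ∪ Up`. An ideal of a semisimple Lie
algebra that is an atom among ideals is a simple Lie algebra, so it remains to show that every
ideal `M` below it is `⊥` or all of it.

The grading derivation, acting by `-1, 0, 1` on `Um, U0, Up`, is inner by Cartan's criterion.
Hence every ideal is stable under it, and so under the projections onto the graded pieces, which
are polynomials in it. Writing `L = M ⊕ Mᶜ`, the piece `Up` therefore splits as
`(Up ⊓ M) ⊕ (Up ⊓ Mᶜ)`, and simplicity of `Up` as a `U0`-module puts `Up` inside `M` or inside
`Mᶜ`. An ideal containing `Up` contains `⁅Um, Up⁆` and all of `Um`: the part of `Um` lying in the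
complement commutes with `Up`, and the elements of `Um` commuting with `Up` form an abelian ideal.
-/

open LieAlgebra

section

variable {F L : Type*} [Field F] [LieRing L] [LieAlgebra F L]

theorem LieIdeal.eq_bot_of_forall_lie_eq_zero [HasTrivialRadical F L] (I : LieIdeal F L)
    (h : ∀ x ∈ I, ∀ y ∈ I, ⁅x, y⁆ = 0) : I = ⊥ := by
  have : IsLieAbelian I :=
    (LieSubmodule.lie_abelian_iff_lie_self_eq_bot I).mpr ((LieSubmodule.lie_eq_bot_iff I I).mpr h)
  exact HasTrivialRadical.eq_bot_of_isSolvable I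

theorem LieIdeal.lie_eq_zero_of_mem_compl [IsSemisimple F L] {M : LieIdeal F L} {x y : L}
    (hx : x ∈ M) (hy : y ∈ Mᶜ) : ⁅x, y⁆ = 0 := by
  have hxy : ⁅x, y⁆ ∈ M ⊓ Mᶜ :=
    (LieSubmodule.mem_inf _ _ _).mpr ⟨lie_mem_left F L M x y hx, lie_mem_right F L Mᶜ x y hy⟩
  rwa [inf_compl_eq_bot, LieSubmodule.mem_bot] at hxy

theorem LieIdeal.toSubmodule_sup_compl [IsSemisimple F L] (M : LieIdeal F L) :
    M.toSubmodule ⊔ Mᶜ.toSubmodule = ⊤ := by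
  rw [← LieSubmodule.sup_toSubmodule, sup_compl_eq_top, LieSubmodule.top_toSubmodule]

theorem LinearMap.IsProj.le_inf_sup_inf {V : Type*} [AddCommGroup V] [Module F V]
    {p M₁ M₂ : Submodule F V} {f : V →ₗ[F] V} (hf : IsProj p f) (hsup : M₁ ⊔ M₂ = ⊤)
    (h₁ : ∀ x ∈ M₁, f x ∈ M₁) (h₂ : ∀ x ∈ M₂, f x ∈ M₂) : p ≤ p ⊓ M₁ ⊔ p ⊓ M₂ := by
  intro x hx
  obtain ⟨m₁, hm₁, m₂, hm₂, rfl⟩ := Submodule.mem_sup.mp (hsup ▸ Submodule.mem_top : x ∈ M₁ ⊔ M₂)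
  rw [← hf.map_id _ hx, map_add]
  exact Submodule.add_mem_sup ⟨hf.map_mem m₁, h₁ m₁ hm₁⟩ ⟨hf.map_mem m₂, h₂ m₂ hm₂⟩

def lieBracketSpan (V W : Submodule F L) : Submodule F L :=
  Submodule.span F {z : L | ∃ x ∈ V, ∃ y ∈ W, z = ⁅x, y⁆}

theorem lie_mem_lieBracketSpan {V W : Submodule F L} {x y : L} (hx : x ∈ V) (hy : y ∈ W) :
    ⁅x, y⁆ ∈ lieBracketSpan V W :=
  Submodule.subset_span ⟨x, hx, y, hy, rfl⟩

theorem lieBracketSpan_le {V W P : Submodule F L} :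
    lieBracketSpan V W ≤ P ↔ ∀ x ∈ V, ∀ y ∈ W, ⁅x, y⁆ ∈ P := by
  simp only [lieBracketSpan, Submodule.span_le, Set.subset_def, Set.mem_ofPred_eq,
    SetLike.mem_coe]
  exact ⟨fun h x hx y hy => h _ ⟨x, hx, y, hy, rfl⟩, fun h _ ⟨x, hx, y, hy, hz⟩ => hz ▸ h x hx y hy⟩

structure IsShortGrading (Um U0 Up : Submodule F L) : Prop where
  lie_mem_zero_zero : ∀ x ∈ U0, ∀ y ∈ U0, ⁅x, y⁆ ∈ U0
  lie_mem_zero_pos : ∀ x ∈ U0, ∀ y ∈ Up, ⁅x, y⁆ ∈ Up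
  lie_mem_zero_neg : ∀ x ∈ U0, ∀ y ∈ Um, ⁅x, y⁆ ∈ Um
  lie_mem_neg_pos : ∀ x ∈ Um, ∀ y ∈ Up, ⁅x, y⁆ ∈ U0
  lie_pos_pos : ∀ x ∈ Up, ∀ y ∈ Up, ⁅x, y⁆ = 0
  lie_neg_neg : ∀ x ∈ Um, ∀ y ∈ Um, ⁅x, y⁆ = 0
  isCompl : IsCompl Um (U0 ⊔ Up)
  disjoint : Disjoint U0 Up

namespace IsShortGrading

variable {Um U0 Up : Submodule F L} (hg : IsShortGrading Um U0 Up)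
include hg

theorem lie_mem_pos_zero {x y : L} (hx : x ∈ Up) (hy : y ∈ U0) : ⁅x, y⁆ ∈ Up := by
  rw [← lie_skew]; exact Up.neg_mem (hg.lie_mem_zero_pos y hy x hx)

theorem lie_mem_neg_zero {x y : L} (hx : x ∈ Um) (hy : y ∈ U0) : ⁅x, y⁆ ∈ Um := by
  rw [← lie_skew]; exact Um.neg_mem (hg.lie_mem_zero_neg y hy x hx)

theorem lie_mem_pos_neg {x y : L} (hx : x ∈ Up) (hy : y ∈ Um) : ⁅x, y⁆ ∈ U0 := by
  rw [← lie_skew]; exact U0.neg_mem (hg.lie_mem_neg_pos y hy x hx)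

theorem exists_decomposition (z : L) : ∃ a ∈ Um, ∃ b ∈ U0, ∃ c ∈ Up, z = a + b + c := by
  have hz : z ∈ Um ⊔ (U0 ⊔ Up) := hg.isCompl.sup_eq_top ▸ Submodule.mem_top
  obtain ⟨a, ha, w, hw, rfl⟩ := Submodule.mem_sup.mp hz
  obtain ⟨b, hb, c, hc, rfl⟩ := Submodule.mem_sup.mp hw
  exact ⟨a, ha, b, hb, c, hc, (add_assoc a b c).symm⟩

theorem lie_mem_of_forall_mem {S : Submodule F L} (hneg : ∀ x ∈ Um, ∀ m ∈ S, ⁅x, m⁆ ∈ S)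
    (hzero : ∀ x ∈ U0, ∀ m ∈ S, ⁅x, m⁆ ∈ S) (hpos : ∀ x ∈ Up, ∀ m ∈ S, ⁅x, m⁆ ∈ S)
    (z : L) {m : L} (hm : m ∈ S) : ⁅z, m⁆ ∈ S := by
  obtain ⟨a, ha, b, hb, c, hc, rfl⟩ := hg.exists_decomposition z
  simp only [add_lie]
  exact S.add_mem (S.add_mem (hneg a ha m hm) (hzero b hb m hm)) (hpos c hc m hm)

theorem lieBracketSpan_le_zero : lieBracketSpan Um Up ≤ U0 :=
  lieBracketSpan_le.mpr hg.lie_mem_neg_pos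

theorem lie_mem_lieBracketSpan_of_mem_zero {x t : L} (hx : x ∈ U0)
    (ht : t ∈ lieBracketSpan Um Up) : ⁅x, t⁆ ∈ lieBracketSpan Um Up := by
  suffices lieBracketSpan Um Up ≤ (lieBracketSpan Um Up).comap (ad F L x) from this ht
  refine lieBracketSpan_le.mpr fun a ha c hc => ?_
  rw [Submodule.mem_comap, ad_apply, leibniz_lie]
  exact add_mem (lie_mem_lieBracketSpan (hg.lie_mem_zero_neg x hx a ha) hc)
    (lie_mem_lieBracketSpan ha (hg.lie_mem_zero_pos x hx c hc))

def ideal : LieIdeal F L where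
  toSubmodule := Um ⊔ lieBracketSpan Um Up ⊔ Up
  lie_mem := by
    intro z m hm
    refine hg.lie_mem_of_forall_mem (fun x hx m hm => ?_) (fun x hx m hm => ?_)
      (fun x hx m hm => ?_) z hm <;>
    obtain ⟨m', hm', c, hc, rfl⟩ := Submodule.mem_sup.mp hm <;>
    obtain ⟨a, ha, t, ht, rfl⟩ := Submodule.mem_sup.mp hm' <;>
    simp only [lie_add] <;>
    refine add_mem (add_mem ?_ ?_) ?_
    · rw [hg.lie_neg_neg x hx a ha]; exact zero_mem _
    · exact Submodule.mem_sup_left (Submodule.mem_sup_left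
        (hg.lie_mem_neg_zero hx (hg.lieBracketSpan_le_zero ht)))
    · exact Submodule.mem_sup_left (Submodule.mem_sup_right (lie_mem_lieBracketSpan hx hc))
    · exact Submodule.mem_sup_left (Submodule.mem_sup_left (hg.lie_mem_zero_neg x hx a ha))
    · exact Submodule.mem_sup_left (Submodule.mem_sup_right
        (hg.lie_mem_lieBracketSpan_of_mem_zero hx ht))
    · exact Submodule.mem_sup_right (hg.lie_mem_zero_pos x hx c hc)
    · rw [← lie_skew]
      exact neg_mem (Submodule.mem_sup_left
        (Submodule.mem_sup_right (lie_mem_lieBracketSpan ha hx)))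
    · exact Submodule.mem_sup_right (hg.lie_mem_pos_zero hx (hg.lieBracketSpan_le_zero ht))
    · rw [hg.lie_pos_pos x hx c hc]; exact zero_mem _

theorem toSubmodule_lieSpan :
    (LieSubalgebra.lieSpan F L ((Um : Set L) ∪ Up)).toSubmodule
      = Um ⊔ lieBracketSpan Um Up ⊔ Up := by
  set K := LieSubalgebra.lieSpan F L ((Um : Set L) ∪ Up)
  have hUm : Um ≤ K.toSubmodule := fun x hx => LieSubalgebra.subset_lieSpan (Or.inl hx)
  have hUp : Up ≤ K.toSubmodule := fun x hx => LieSubalgebra.subset_lieSpan (Or.inr hx)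
  refine le_antisymm ?_ (sup_le (sup_le hUm ?_) hUp)
  · have : K ≤ hg.ideal := LieSubalgebra.lieSpan_le.mpr
      (Set.union_subset (fun x hx => Submodule.mem_sup_left (Submodule.mem_sup_left hx))
        fun x hx => Submodule.mem_sup_right hx)
    exact this
  · exact lieBracketSpan_le.mpr fun x hx y hy => K.lie_mem (hUm hx) (hUp hy)

theorem lieSpan_eq_ideal :
    LieSubalgebra.lieSpan F L ((Um : Set L) ∪ Up) = hg.ideal :=
  LieSubalgebra.toSubmodule_injective hg.toSubmodule_lieSpan

theorem isCompl_pos : IsCompl Up (Um ⊔ U0) :=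
  (Disjoint.isCompl_sup_left_of_isCompl_sup_right hg.disjoint hg.isCompl).symm

noncomputable def projNeg : L →ₗ[F] L := Um.projection (U0 ⊔ Up) hg.isCompl

noncomputable def projPos : L →ₗ[F] L := Up.projection (Um ⊔ U0) hg.isCompl_pos

theorem isProj_projNeg : LinearMap.IsProj Um hg.projNeg :=
  ⟨Submodule.projection_apply_mem _, fun _ hx => Submodule.projection_apply_of_mem_left _ hx⟩

theorem isProj_projPos : LinearMap.IsProj Up hg.projPos :=
  ⟨Submodule.projection_apply_mem _, fun _ hx => Submodule.projection_apply_of_mem_left _ hx⟩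

noncomputable def gradingMap : L →ₗ[F] L := hg.projPos - hg.projNeg

@[simp]
theorem gradingMap_of_mem_neg {x : L} (hx : x ∈ Um) : hg.gradingMap x = -x := by
  simp [gradingMap, projPos, projNeg, Submodule.projection_apply_of_mem_left _ hx,
    Submodule.projection_apply_of_mem_right _ (Submodule.mem_sup_left hx : x ∈ Um ⊔ U0)]

@[simp]
theorem gradingMap_of_mem_zero {x : L} (hx : x ∈ U0) : hg.gradingMap x = 0 := by
  simp [gradingMap, projPos, projNeg,
    Submodule.projection_apply_of_mem_right _ (Submodule.mem_sup_left hx : x ∈ U0 ⊔ Up),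
    Submodule.projection_apply_of_mem_right _ (Submodule.mem_sup_right hx : x ∈ Um ⊔ U0)]

@[simp]
theorem gradingMap_of_mem_pos {x : L} (hx : x ∈ Up) : hg.gradingMap x = x := by
  simp [gradingMap, projPos, projNeg, Submodule.projection_apply_of_mem_left _ hx,
    Submodule.projection_apply_of_mem_right _ (Submodule.mem_sup_right hx : x ∈ U0 ⊔ Up)]

theorem gradingMap_lie_of_mem {a b : L} (ha : a ∈ Um ∨ a ∈ U0 ∨ a ∈ Up)
    (hb : b ∈ Um ∨ b ∈ U0 ∨ b ∈ Up) :
    hg.gradingMap ⁅a, b⁆ = ⁅a, hg.gradingMap b⁆ - ⁅b, hg.gradingMap a⁆ := by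
  rcases ha with ha | ha | ha <;> rcases hb with hb | hb | hb
  · simp [hg.lie_neg_neg a ha b hb, hg.lie_neg_neg b hb a ha, ha, hb]
  · simp [hg.lie_mem_neg_zero ha hb, ha, hb]
  · simp [hg.lie_mem_neg_pos a ha b hb, ha, hb]
  · simp [hg.lie_mem_zero_neg a ha b hb, ha, hb]
  · simp [hg.lie_mem_zero_zero a ha b hb, ha, hb]
  · simp [hg.lie_mem_zero_pos a ha b hb, ha, hb]
  · simp [hg.lie_mem_pos_neg ha hb, ha, hb]
  · simp [hg.lie_mem_pos_zero ha hb, ha, hb]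
  · simp [hg.lie_pos_pos a ha b hb, hg.lie_pos_pos b hb a ha, ha, hb]

theorem gradingMap_lie_of_mem_left {a : L} (ha : a ∈ Um ∨ a ∈ U0 ∨ a ∈ Up) (b : L) :
    hg.gradingMap ⁅a, b⁆ = ⁅a, hg.gradingMap b⁆ - ⁅b, hg.gradingMap a⁆ := by
  obtain ⟨b1, hb1, b2, hb2, b3, hb3, rfl⟩ := hg.exists_decomposition b
  simp only [lie_add, add_lie, map_add, hg.gradingMap_lie_of_mem ha (.inl hb1),
    hg.gradingMap_lie_of_mem ha (.inr (.inl hb2)), hg.gradingMap_lie_of_mem ha (.inr (.inr hb3))]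
  abel

theorem gradingMap_lie (a b : L) :
    hg.gradingMap ⁅a, b⁆ = ⁅a, hg.gradingMap b⁆ - ⁅b, hg.gradingMap a⁆ := by
  obtain ⟨a1, ha1, a2, ha2, a3, ha3, rfl⟩ := hg.exists_decomposition a
  simp only [lie_add, add_lie, map_add, hg.gradingMap_lie_of_mem_left (.inl ha1),
    hg.gradingMap_lie_of_mem_left (.inr (.inl ha2)),
    hg.gradingMap_lie_of_mem_left (.inr (.inr ha3))]
  abel

theorem projPos_eq [NeZero (2 : F)] (x : L) :
    hg.projPos x = (2⁻¹ : F) • (hg.gradingMap (hg.gradingMap x) + hg.gradingMap x) := by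
  have hD : hg.gradingMap x = hg.projPos x - hg.projNeg x := rfl
  rw [hD, map_sub, hg.gradingMap_of_mem_pos (hg.isProj_projPos.map_mem x),
    hg.gradingMap_of_mem_neg (hg.isProj_projNeg.map_mem x)]
  match_scalars <;> field_simp <;> ring

theorem projNeg_eq [NeZero (2 : F)] (x : L) :
    hg.projNeg x = (2⁻¹ : F) • (hg.gradingMap (hg.gradingMap x) - hg.gradingMap x) := by
  have hD : hg.gradingMap x = hg.projPos x - hg.projNeg x := rfl
  rw [hD, map_sub, hg.gradingMap_of_mem_pos (hg.isProj_projPos.map_mem x),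
    hg.gradingMap_of_mem_neg (hg.isProj_projNeg.map_mem x)]
  match_scalars <;> field_simp <;> ring

section HasTrivialRadical

variable [HasTrivialRadical F L]

theorem eq_zero_of_forall_lie_eq_zero {x : L} (hx : x ∈ Um) (hx' : ∀ y ∈ Up, ⁅y, x⁆ = 0) :
    x = 0 := by
  let C : Submodule F L := Um ⊓ ⨅ y : Up, LinearMap.ker (ad F L y)
  have hC {z : L} : z ∈ C ↔ z ∈ Um ∧ ∀ y ∈ Up, ⁅y, z⁆ = 0 := by
    simp [C, Submodule.mem_iInf]
  let Z : LieIdeal F L :=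
    { toSubmodule := C
      lie_mem := fun {z m} hm => by
        refine hg.lie_mem_of_forall_mem (fun a ha m hm => ?_) (fun b hb m hm => ?_)
          (fun c hc m hm => ?_) z hm
        · rw [hg.lie_neg_neg a ha m (hC.mp hm).1]; exact C.zero_mem
        · refine hC.mpr ⟨hg.lie_mem_zero_neg b hb m (hC.mp hm).1, fun y hy => ?_⟩
          rw [leibniz_lie, (hC.mp hm).2 _ (hg.lie_mem_pos_zero hy hb), (hC.mp hm).2 y hy,
            lie_zero, add_zero]
        · rw [(hC.mp hm).2 c hc]; exact C.zero_mem }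
  have hZ : Z = ⊥ := Z.eq_bot_of_forall_lie_eq_zero fun p hp q hq =>
    hg.lie_neg_neg p (hC.mp hp).1 q (hC.mp hq).1
  have hxZ : x ∈ Z := hC.mpr ⟨hx, hx'⟩
  rwa [hZ, LieSubmodule.mem_bot] at hxZ

end HasTrivialRadical

section Semisimple

variable [CharZero F] [Module.Finite F L] [IsSemisimple F L]

theorem exists_lie_eq_gradingMap : ∃ h : L, ∀ x, ⁅h, x⁆ = hg.gradingMap x := by
  obtain ⟨h, hh⟩ := LieDerivation.IsKilling.exists_eq_ad
    (⟨hg.gradingMap, hg.gradingMap_lie⟩ : LieDerivation F L L)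
  exact ⟨h, fun x => by simpa using congrArg (· x) hh⟩

theorem gradingMap_mem (M : LieIdeal F L) {x : L} (hx : x ∈ M) : hg.gradingMap x ∈ M := by
  obtain ⟨h, hh⟩ := hg.exists_lie_eq_gradingMap
  exact hh x ▸ lie_mem_right F L M h x hx

theorem projPos_mem_of_mem (M : LieIdeal F L) {x : L} (hx : x ∈ M) : hg.projPos x ∈ M := by
  have hDx := hg.gradingMap_mem M hx
  rw [hg.projPos_eq]
  exact M.toSubmodule.smul_mem _ (add_mem (hg.gradingMap_mem M hDx) hDx)

theorem projNeg_mem_of_mem (M : LieIdeal F L) {x : L} (hx : x ∈ M) : hg.projNeg x ∈ M := by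
  have hDx := hg.gradingMap_mem M hx
  rw [hg.projNeg_eq]
  exact M.toSubmodule.smul_mem _ (sub_mem (hg.gradingMap_mem M hDx) hDx)

theorem pos_le_inf_sup_inf_compl (M : LieIdeal F L) :
    Up ≤ Up ⊓ M.toSubmodule ⊔ Up ⊓ Mᶜ.toSubmodule :=
  hg.isProj_projPos.le_inf_sup_inf M.toSubmodule_sup_compl
    (fun _ => hg.projPos_mem_of_mem M) (fun _ => hg.projPos_mem_of_mem Mᶜ)

theorem neg_le_inf_sup_inf_compl (M : LieIdeal F L) :
    Um ≤ Um ⊓ M.toSubmodule ⊔ Um ⊓ Mᶜ.toSubmodule :=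
  hg.isProj_projNeg.le_inf_sup_inf M.toSubmodule_sup_compl
    (fun _ => hg.projNeg_mem_of_mem M) (fun _ => hg.projNeg_mem_of_mem Mᶜ)

theorem pos_le_or_pos_le_compl
    (hsimple : ∀ W : Submodule F L, W ≤ Up → (∀ x ∈ U0, ∀ w ∈ W, ⁅x, w⁆ ∈ W) → W = ⊥ ∨ W = Up)
    (M : LieIdeal F L) : Up ≤ M.toSubmodule ∨ Up ≤ Mᶜ.toSubmodule := by
  have hstable (N : LieIdeal F L) :
      ∀ x ∈ U0, ∀ w ∈ Up ⊓ N.toSubmodule, ⁅x, w⁆ ∈ Up ⊓ N.toSubmodule :=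
    fun x hx w hw => ⟨hg.lie_mem_zero_pos x hx w hw.1, N.lie_mem hw.2⟩
  rcases hsimple _ inf_le_left (hstable M) with hM | hM
  · rcases hsimple _ inf_le_left (hstable Mᶜ) with hMc | hMc
    · have := hg.pos_le_inf_sup_inf_compl M
      rw [hM, hMc, bot_sup_eq] at this
      exact .inl (this.trans bot_le)
    · exact .inr (inf_eq_left.mp hMc)
  · exact .inl (inf_eq_left.mp hM)

theorem ideal_le_of_pos_le (M : LieIdeal F L) (hM : Up ≤ M.toSubmodule) : hg.ideal ≤ M := by
  have hB : lieBracketSpan Um Up ≤ M.toSubmodule :=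
    lieBracketSpan_le.mpr fun x _ y hy => lie_mem_right F L M x y (hM hy)
  have hUmMc : Um ⊓ Mᶜ.toSubmodule = ⊥ := eq_bot_iff.mpr fun x hx =>
    hg.eq_zero_of_forall_lie_eq_zero hx.1 fun y hy => LieIdeal.lie_eq_zero_of_mem_compl (hM hy) hx.2
  have hUm : Um ≤ M.toSubmodule := by
    have := hg.neg_le_inf_sup_inf_compl M
    rw [hUmMc, sup_bot_eq] at this
    exact this.trans inf_le_right
  exact (LieSubmodule.toSubmodule_le_toSubmodule _ _).mp (sup_le (sup_le hUm hB) hM)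

theorem isAtom_ideal (hne : Up ≠ ⊥)
    (hsimple : ∀ W : Submodule F L, W ≤ Up → (∀ x ∈ U0, ∀ w ∈ W, ⁅x, w⁆ ∈ W) → W = ⊥ ∨ W = Up) :
    IsAtom hg.ideal := by
  refine ⟨fun h => hne (eq_bot_iff.mpr ?_), fun N hN => ?_⟩
  · have hUp : Up ≤ hg.ideal.toSubmodule := le_sup_right
    rwa [h, LieSubmodule.bot_toSubmodule] at hUp
  · rcases hg.pos_le_or_pos_le_compl hsimple N with h | h
    · exact absurd (hg.ideal_le_of_pos_le N h) hN.not_ge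
    · exact le_compl_self.mp (hN.le.trans (hg.ideal_le_of_pos_le Nᶜ h))

end Semisimple

end IsShortGrading

end

/-- If `u = u₋₁ ⊕ u₀ ⊕ u₁` is a short ℤ-graded semisimple Lie algebra over a field of
characteristic 0 such that `u₁` is a simple `u₀`-module, then the Lie subalgebra generated by
`u₁` and `u₋₁` equals `u₋₁ ⊕ [u₋₁, u₁] ⊕ u₁` and is a simple Lie algebra. -/
theorem stmt0 (F : Type*) [Field F] [CharZero F]
    (L : Type*) [LieRing L] [LieAlgebra F L] [Module.Finite F L]
    [LieAlgebra.IsSemisimple F L]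
    (Um U0 Up : Submodule F L)
    -- grading relations
    (h00 : ∀ x ∈ U0, ∀ y ∈ U0, ⁅x, y⁆ ∈ U0)
    (h0p : ∀ x ∈ U0, ∀ y ∈ Up, ⁅x, y⁆ ∈ Up)
    (h0m : ∀ x ∈ U0, ∀ y ∈ Um, ⁅x, y⁆ ∈ Um)
    (hmp : ∀ x ∈ Um, ∀ y ∈ Up, ⁅x, y⁆ ∈ U0)
    (hpp : ∀ x ∈ Up, ∀ y ∈ Up, ⁅x, y⁆ = 0)
    (hmm : ∀ x ∈ Um, ∀ y ∈ Um, ⁅x, y⁆ = 0)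
    -- direct sum decomposition
    (hsum : Um ⊔ U0 ⊔ Up = ⊤)
    (hind1 : Um ⊓ (U0 ⊔ Up) = ⊥)
    (hind2 : U0 ⊓ Up = ⊥)
    -- `u₁` is a simple `u₀`-module
    (hne : Up ≠ ⊥)
    (hsimple : ∀ W : Submodule F L, W ≤ Up →
      (∀ x ∈ U0, ∀ w ∈ W, ⁅x, w⁆ ∈ W) → W = ⊥ ∨ W = Up) :
    (LieSubalgebra.lieSpan F L ((Um : Set L) ∪ (Up : Set L))).toSubmodule
      = Um ⊔ Submodule.span F {z : L | ∃ x ∈ Um, ∃ y ∈ Up, z = ⁅x, y⁆} ⊔ Up ∧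
    LieAlgebra.IsSimple F ↥(LieSubalgebra.lieSpan F L ((Um : Set L) ∪ (Up : Set L))) := by
  have hcompl : IsCompl Um (U0 ⊔ Up) :=
    ⟨disjoint_iff.mpr hind1, codisjoint_iff.mpr (by rw [← sup_assoc, hsum])⟩
  have hg : IsShortGrading Um U0 Up :=
    ⟨h00, h0p, h0m, hmp, hpp, hmm, hcompl, disjoint_iff.mpr hind2⟩
  refine ⟨hg.toSubmodule_lieSpan, ?_⟩
  rw [hg.lieSpan_eq_ideal]
  exact IsSemisimple.isSimple_of_isAtom _ (hg.isAtom_ideal hne hsimple)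
end

section
/- Let E be a finite-dimensional sl₂-module over a field of characteristic 0, with weight space decomposition E = ⊕ₚ Eₚ under h. For j ≥ 0, the map eʲ : Eₚ → Eₚ₊₂ⱼ is injective if j ≤ -p, bijective if j = -p, and surjective if j ≥ -p (when p ≤ 0). -/
/-!
For a weight vector `v` of weight `q`, the commutation rule
`f e^(j+1) v = e^(j+1) f v - (j+1)(q+j) e^j v` shows that `f^(j+1) e^(j+1) v = f^j e^j u` with
`u = e f v - (j+1)(q+j) v` again of weight `q`. Inducting on `j`, if `j ≤ -q` and
`f^j e^j v = 0` then `v` is an eigenvector of `e f` with eigenvalue `a < 0`. Going down the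
`f`-string of such a `v` keeps it an `e f`-eigenvector with negative eigenvalue, so the string never
reaches `0`; since `h`-eigenvectors of distinct weights are independent, this forces `v = 0`.
Thus `f^j e^j` is injective on `E_q` when `j ≤ -q`. The same statement for the triple `(f, -h, e)`
makes `e^j f^j` injective, hence bijective, on `E_q` when `j ≤ q`, which gives surjectivity.
-/

section Weights

variable {F E : Type*} [Field F] [AddCommGroup E] [Module F E]
  {h x : Module.End F E} {c μ : F} {v : E}

lemma apply_apply_of_lie_eq_smul (hx : ⁅h, x⁆ = c • x) (hv : h v = μ • v) :
    h (x v) = (μ + c) • x v := by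
  have hxv := congr($hx v)
  rw [Ring.lie_def, LinearMap.sub_apply, Module.End.mul_apply, Module.End.mul_apply, hv,
    map_smul, sub_eq_iff_eq_add] at hxv
  rw [hxv, LinearMap.smul_apply, add_smul, add_comm]

lemma apply_pow_apply_of_lie_eq_smul (hx : ⁅h, x⁆ = c • x) (hv : h v = μ • v) (n : ℕ) :
    h ((x ^ n) v) = (μ + n * c) • (x ^ n) v := by
  induction n with
  | zero => simpa using hv
  | succ n ih =>
    rw [pow_succ', Module.End.mul_apply, apply_apply_of_lie_eq_smul hx ih]
    push_cast
    ring_nf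

lemma exists_pow_apply_eq_zero [CharZero F] [FiniteDimensional F E]
    (hx : ⁅h, x⁆ = c • x) (hc : c ≠ 0) (hv : h v = μ • v) : ∃ n : ℕ, (x ^ n) v = 0 := by
  by_contra! hne
  have hinj : Function.Injective fun n : ℕ ↦ μ + n * c := fun m n hmn ↦ by
    simpa [hc] using hmn
  exact Module.Finite.not_linearIndependent_of_infinite _ <|
    h.eigenvectors_linearIndependent' _ hinj _ fun n ↦
      ⟨Module.End.mem_eigenspace_iff.mpr (apply_pow_apply_of_lie_eq_smul hx hv n), hne n⟩

end Weights

section Sl2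

variable {F E : Type*} [Field F] [AddCommGroup E] [Module F E] {e h f : Module.End F E}

lemma f_apply_e_apply (hef : ⁅e, f⁆ = h) (v : E) : f (e v) = e (f v) - h v := by
  rw [← hef, Ring.lie_def, LinearMap.sub_apply, Module.End.mul_apply, Module.End.mul_apply,
    sub_sub_cancel]

lemma f_apply_e_pow_succ_apply (hhe : ⁅h, e⁆ = (2 : F) • e) (hef : ⁅e, f⁆ = h) {μ : F} {v : E}
    (hv : h v = μ • v) (n : ℕ) :
    f ((e ^ (n + 1)) v) = (e ^ (n + 1)) (f v) - ((n + 1) * (μ + n)) • (e ^ n) v := by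
  induction n with
  | zero => simp [f_apply_e_apply hef, hv]
  | succ n ih =>
    rw [pow_succ' e (n + 1), Module.End.mul_apply, f_apply_e_apply hef, ih,
      apply_pow_apply_of_lie_eq_smul hhe hv, map_sub, map_smul, ← Module.End.mul_apply e (e ^ n),
      ← pow_succ', ← Module.End.mul_apply e, ← pow_succ']
    push_cast
    module

lemma e_apply_f_apply_f_apply (hhf : ⁅h, f⁆ = (-2 : F) • f) (hef : ⁅e, f⁆ = h) {μ a : F} {v : E}
    (hv : h v = μ • v) (hefv : e (f v) = a • v) : e (f (f v)) = (a + μ - 2) • f v := by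
  have hcomm := f_apply_e_apply hef (f v)
  rw [hefv, map_smul, apply_apply_of_lie_eq_smul hhf hv, eq_sub_iff_add_eq] at hcomm
  rw [← hcomm]
  module

lemma f_pow_apply_ne_zero [CharZero F] (hhf : ⁅h, f⁆ = (-2 : F) • f) (hef : ⁅e, f⁆ = h) {q a : ℤ}
    (hq : q ≤ 0) (ha : a < 0) {v : E} (hv0 : v ≠ 0) (hv : h v = (q : F) • v)
    (hefv : e (f v) = (a : F) • v) (n : ℕ) : (f ^ n) v ≠ 0 := by
  induction n generalizing q a v with
  | zero => simpa using hv0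
  | succ n ih =>
    have hfv0 : f v ≠ 0 := fun hfv ↦ hv0 <| by
      rwa [hfv, map_zero, eq_comm, smul_eq_zero, Int.cast_eq_zero, or_iff_right ha.ne] at hefv
    rw [pow_succ, Module.End.mul_apply]
    refine ih (q := q - 2) (a := a + q - 2) (by omega) (by omega) hfv0 ?_ ?_
    · rw [apply_apply_of_lie_eq_smul hhf hv]; push_cast; ring_nf
    · rw [e_apply_f_apply_f_apply hhf hef hv hefv]; push_cast; ring_nf

lemma eq_zero_of_e_apply_f_apply_eq_smul [CharZero F] [FiniteDimensional F E]
    (hhf : ⁅h, f⁆ = (-2 : F) • f) (hef : ⁅e, f⁆ = h) {q a : ℤ} (hq : q ≤ 0) (ha : a < 0) {v : E}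
    (hv : h v = (q : F) • v) (hefv : e (f v) = (a : F) • v) : v = 0 := by
  by_contra hv0
  obtain ⟨n, hn⟩ := exists_pow_apply_eq_zero hhf (by norm_num) hv
  exact f_pow_apply_ne_zero hhf hef hq ha hv0 hv hefv n hn

lemma eq_zero_of_f_pow_e_pow_apply_eq_zero [CharZero F] [FiniteDimensional F E]
    (hhe : ⁅h, e⁆ = (2 : F) • e) (hhf : ⁅h, f⁆ = (-2 : F) • f) (hef : ⁅e, f⁆ = h) {j : ℕ} {q : ℤ}
    (hjq : (j : ℤ) ≤ -q) {v : E} (hv : h v = (q : F) • v) (hker : (f ^ j) ((e ^ j) v) = 0) :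
    v = 0 := by
  induction j generalizing v with
  | zero => simpa using hker
  | succ j ih =>
    set a : ℤ := (j + 1) * (q + j)
    -- `f^(j+1) e^(j+1) v = f^j e^j (e f v - a v)`, and `e f v - a v` again has weight `q`.
    have hw : h (e (f v) - (a : F) • v) = (q : F) • (e (f v) - (a : F) • v) := by
      rw [map_sub, map_smul, apply_apply_of_lie_eq_smul hhe (apply_apply_of_lie_eq_smul hhf hv), hv]
      module
    have hefv : e (f v) - (a : F) • v = 0 := by
      refine ih (by omega) hw ?_
      rw [pow_succ, Module.End.mul_apply, f_apply_e_pow_succ_apply hhe hef hv, pow_succ,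
        Module.End.mul_apply] at hker
      simpa [a, map_sub, map_smul] using hker
    refine eq_zero_of_e_apply_f_apply_eq_smul hhf hef (q := q) (a := a) (by omega) ?_ hv
      (sub_eq_zero.mp hefv)
    exact mul_neg_of_pos_of_neg (by omega) (by omega)

lemma exists_e_pow_f_pow_apply_eq [CharZero F] [FiniteDimensional F E]
    (hhe : ⁅h, e⁆ = (2 : F) • e) (hhf : ⁅h, f⁆ = (-2 : F) • f) (hef : ⁅e, f⁆ = h) {j : ℕ} {q : ℤ}
    (hjq : (j : ℤ) ≤ q) {w : E} (hw : h w = (q : F) • w) :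
    ∃ v : E, h v = (q : F) • v ∧ (e ^ j) ((f ^ j) v) = w := by
  have hmaps : ∀ v ∈ h.eigenspace (q : F), (e ^ j * f ^ j) v ∈ h.eigenspace (q : F) := by
    intro v hv
    rw [Module.End.mem_eigenspace_iff] at hv ⊢
    rw [Module.End.mul_apply,
      apply_pow_apply_of_lie_eq_smul hhe (apply_pow_apply_of_lie_eq_smul hhf hv j)]
    ring_nf
  have hhf' : ⁅-h, f⁆ = (2 : F) • f := by
    rw [Ring.lie_def] at hhf ⊢
    rw [neg_mul, mul_neg, sub_neg_eq_add, neg_add_eq_sub, ← neg_sub, hhf, neg_smul, neg_neg]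
  have hhe' : ⁅-h, e⁆ = (-2 : F) • e := by
    rw [Ring.lie_def] at hhe ⊢
    rw [neg_mul, mul_neg, sub_neg_eq_add, neg_add_eq_sub, ← neg_sub, hhe, neg_smul]
  have hfe : ⁅f, e⁆ = -h := by
    rw [Ring.lie_def] at hef ⊢
    rw [← hef, neg_sub]
  have hinj : Set.InjOn (e ^ j * f ^ j) (h.eigenspace (q : F)) := by
    intro v hv v' hv' hvv'
    rw [← sub_eq_zero]
    refine eq_zero_of_f_pow_e_pow_apply_eq_zero hhf' hhe' hfe (j := j) (q := -q) (by omega) ?_ ?_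
    · rw [SetLike.mem_coe, Module.End.mem_eigenspace_iff] at hv hv'
      rw [LinearMap.neg_apply, map_sub, hv, hv', Int.cast_neg, neg_smul, smul_sub]
    · rw [map_sub, map_sub, ← Module.End.mul_apply, ← Module.End.mul_apply, hvv', sub_self]
  obtain ⟨v, hv, rfl⟩ := (LinearMap.injOn_iff_surjOn hmaps).mp hinj
    (Module.End.mem_eigenspace_iff.mpr hw)
  exact ⟨v, Module.End.mem_eigenspace_iff.mp hv, rfl⟩

end Sl2

/-- Let `E` be a finite-dimensional `sl₂`-module over a field of characteristic 0, with standard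
generators acting as `e, h, f`. For `j ≥ 0` the map `e^j : Eₚ → E_{p+2j}` between weight spaces
is injective if `j ≤ -p`, bijective if `j = -p`, and surjective if `j ≥ -p`. -/
theorem stmt3 (F : Type*) [Field F] [CharZero F]
    (E : Type*) [AddCommGroup E] [Module F E] [FiniteDimensional F E]
    (e h f : Module.End F E)
    (hhe : ⁅h, e⁆ = (2 : F) • e) (hhf : ⁅h, f⁆ = (-2 : F) • f) (hef : ⁅e, f⁆ = h)
    (p : ℤ) (j : ℕ) :
    -- injective if `j ≤ -p`
    (((j : ℤ) ≤ -p) → ∀ v : E, h v = (p : F) • v → (e ^ j) v = 0 → v = 0) ∧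
    -- surjective if `j ≥ -p`
    ((-p ≤ (j : ℤ)) → ∀ w : E, h w = ((p + 2 * j : ℤ) : F) • w →
      ∃ v : E, h v = (p : F) • v ∧ (e ^ j) v = w) ∧
    -- bijective if `j = -p`
    (((j : ℤ) = -p) → ∀ w : E, h w = ((p + 2 * j : ℤ) : F) • w →
      ∃! v : E, h v = (p : F) • v ∧ (e ^ j) v = w) := by
  have inj : (j : ℤ) ≤ -p → ∀ v : E, h v = (p : F) • v → (e ^ j) v = 0 → v = 0 :=
    fun hjp v hv hev ↦ eq_zero_of_f_pow_e_pow_apply_eq_zero hhe hhf hef hjp hv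
      (by rw [hev, map_zero])
  have surj : -p ≤ (j : ℤ) → ∀ w : E, h w = ((p + 2 * j : ℤ) : F) • w →
      ∃ v : E, h v = (p : F) • v ∧ (e ^ j) v = w := by
    intro hjp w hw
    obtain ⟨v, hv, rfl⟩ :=
      exists_e_pow_f_pow_apply_eq hhe hhf hef (j := j) (q := p + 2 * j) (by omega) hw
    refine ⟨(f ^ j) v, ?_, rfl⟩
    rw [apply_pow_apply_of_lie_eq_smul hhf hv]
    push_cast
    ring_nf
  refine ⟨inj, surj, fun hjp w hw ↦ ?_⟩
  obtain ⟨v, hv, rfl⟩ := surj hjp.ge w hw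
  refine ⟨v, ⟨hv, rfl⟩, fun v' ⟨hv', hev'⟩ ↦ sub_eq_zero.mp (inj hjp.le _ ?_ ?_)⟩
  · rw [map_sub, hv, hv', smul_sub]
  · rw [map_sub, hev', sub_self]
end

section
/- Let F be a finite extension of ℚ_p with p odd, let u be a non-square unit of F, π a uniformizer, and E = F(√u). Then there exists a matrix g ∈ GL(2, E) such that g·ᵗḡ = π·I₂, where ᵗḡ denotes the transpose of the entrywise Galois conjugate of g. -/
/-!
For `y = a + b √u` the matrix `g = !![1, y; -σ y, 1]` satisfies `g * ᵗσ(g) = (1 + y σ y) • 1`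
and `det g = 1 + y σ y`, where `y σ y = a² - u b²`. So it suffices that the unit `π - 1` is
represented by the norm form `a² - u b²`. Over the residue field, finite of odd order `q`, such
a representation exists because `a²` and `w + u b²` each take `(q + 1) / 2` values, and it lifts
to `F` because a unit whose residue is a nonzero square is itself a square (Hensel's lemma for
`X² - v`).
-/

open scoped NNReal NormedField Valued

section SquareRoot

variable {K : Type*} [NormedField K] [IsUltrametricDist K] [CompleteSpace K]

theorem exists_sq_eq_one_add_of_norm_lt_one (h2 : ‖(2 : K)‖ = 1) {t : K}
    (ht : ‖t‖ < 1) : ∃ x : K, x ^ 2 = 1 + t := by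
  have h20 : (2 : K) ≠ 0 := by rintro h; simp [h] at h2
  -- `(1 + x) ^ 2 = 1 + t` is the fixed-point equation of `T`, a contraction of the ball
  set T : K → K := fun x => (t - x ^ 2) / 2
  set s := Metric.closedBall (0 : K) ‖t‖
  have hT : Set.MapsTo T s s := by
    intro x hx
    rw [Metric.mem_closedBall, dist_zero_right] at hx ⊢
    calc ‖T x‖ = ‖t - x ^ 2‖ := by simp [T, h2]
      _ ≤ max ‖t‖ ‖x ^ 2‖ := by
          rw [sub_eq_add_neg, ← norm_neg (x ^ 2)]
          exact IsUltrametricDist.norm_add_le_max _ _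
      _ ≤ ‖t‖ := max_le le_rfl (by
          rw [norm_pow, sq]
          exact (mul_le_mul hx hx (norm_nonneg _) (norm_nonneg _)).trans
            (mul_le_of_le_one_left (norm_nonneg _) ht.le))
  have hcontr : ContractingWith ‖t‖₊ (hT.restrict T s s) := by
    refine ⟨ht, LipschitzWith.of_dist_le_mul fun x y => ?_⟩
    simp only [Subtype.dist_eq, dist_eq_norm, Set.MapsTo.val_restrict_apply, coe_nnnorm]
    have hx := x.2; have hy := y.2
    rw [Metric.mem_closedBall, dist_zero_right] at hx hy
    calc ‖T x - T y‖ = ‖(x : K) + y‖ * ‖(x : K) - y‖ := by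
          simp only [T]
          rw [← sub_div, norm_div, h2, div_one, ← norm_mul, ← norm_neg]
          congr 1; ring
      _ ≤ ‖t‖ * ‖(x : K) - y‖ := by
          gcongr
          exact (IsUltrametricDist.norm_add_le_max _ _).trans (max_le hx hy)
  obtain ⟨x, -, hx, -⟩ := hcontr.exists_fixedPoint' Metric.isClosed_closedBall.isComplete hT
    (Metric.mem_closedBall_self (norm_nonneg t)) (edist_ne_top _ _)
  refine ⟨1 + x, ?_⟩
  have hfix : (t - x ^ 2) / 2 = x := hx
  field_simp at hfix
  linear_combination -hfix

theorem isSquare_of_norm_sub_sq_lt_one (h2 : ‖(2 : K)‖ = 1) {v x₀ : K}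
    (hx₀ : ‖x₀‖ = 1) (hv : ‖v - x₀ ^ 2‖ < 1) : IsSquare v := by
  have hx₀0 : x₀ ≠ 0 := norm_ne_zero_iff.mp (by simp [hx₀])
  obtain ⟨x, hx⟩ := exists_sq_eq_one_add_of_norm_lt_one h2
    (t := (v - x₀ ^ 2) / x₀ ^ 2) (by simpa [norm_div, hx₀] using hv)
  refine ⟨x₀ * x, ?_⟩
  rw [← sq, mul_pow, hx]
  field_simp
  ring

end SquareRoot

theorem FiniteField.exists_sq_sub_mul_sq_eq {k : Type*} [Field k] [Finite k]
    (hk : ringChar k ≠ 2) {u : k} (hu : u ≠ 0) (w : k) :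
    ∃ a b : k, a ^ 2 - u * b ^ 2 = w := by
  have := Fintype.ofFinite k
  obtain ⟨a, b, hab⟩ := FiniteField.exists_root_sum_quadratic
    (f := Polynomial.X ^ 2 - Polynomial.C w) (g := Polynomial.C (-u) * Polynomial.X ^ 2)
    (Polynomial.degree_X_pow_sub_C two_pos _)
    (Polynomial.degree_C_mul_X_pow 2 (neg_ne_zero.mpr hu))
    (FiniteField.odd_card_of_char_ne_two hk)
  simp only [Polynomial.eval_mul, Polynomial.eval_sub, Polynomial.eval_pow,
    Polynomial.eval_X, Polynomial.eval_C] at hab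
  exact ⟨a, b, by linear_combination hab⟩

section LocalField

variable {K : Type*} [NontriviallyNormedField K] [IsUltrametricDist K]

theorem Valued.integer.residue_eq_zero_iff {x : 𝒪[K]} :
    IsLocalRing.residue 𝒪[K] x = 0 ↔ ‖(x : K)‖ < 1 := by
  rw [IsLocalRing.residue_eq_zero_iff, IsLocalRing.mem_maximalIdeal, mem_nonunits_iff,
    Valued.integer.isUnit_iff_norm_eq_one, lt_iff_le_and_ne]
  exact ⟨fun h => ⟨Valued.integer.norm_le_one x, h⟩, And.right⟩

theorem Valued.integer.compactSpace_of_properSpace [ProperSpace K] : CompactSpace 𝒪[K] := by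
  have h : IsCompact (𝒪[K] : Set K) := by
    convert isCompact_closedBall (0 : K) 1
    ext x
    simp [Valued.integer.mem_iff]
  exact isCompact_iff_compactSpace.mp h

theorem Valued.integer.finite_residueField [ProperSpace K] : Finite 𝓀[K] := by
  let _ : (Valued.v : Valuation K ℝ≥0).RankOne :=
    inferInstanceAs (NormedField.valuation (K := K)).RankOne
  have := Valued.integer.compactSpace_of_properSpace (K := K)
  exact (Valued.integer.compactSpace_iff_completeSpace_and_isDiscreteValuationRing_and_finite_residueField
    |>.mp ‹_›).2.2

theorem Valued.integer.ringChar_residueField_ne_two (h2 : ‖(2 : K)‖ = 1) :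
    ringChar 𝓀[K] ≠ 2 := by
  intro h
  have h20 : IsLocalRing.residue 𝒪[K] 2 = 0 := by
    rw [map_ofNat]
    exact_mod_cast h ▸ ringChar.Nat.cast_ringChar
  exact (Valued.integer.residue_eq_zero_iff.mp h20).ne h2

theorem Valued.integer.norm_eq_one_of_residue_ne_zero {x : 𝒪[K]}
    (hx : IsLocalRing.residue 𝒪[K] x ≠ 0) : ‖(x : K)‖ = 1 :=
  (Valued.integer.norm_le_one x).antisymm
    (not_lt.mp (mt Valued.integer.residue_eq_zero_iff.mpr hx))

theorem isSquare_of_isSquare_residue [CompleteSpace K] (h2 : ‖(2 : K)‖ = 1) {v : 𝒪[K]}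
    (hv : IsSquare (IsLocalRing.residue 𝒪[K] v)) (hv0 : IsLocalRing.residue 𝒪[K] v ≠ 0) :
    IsSquare (v : K) := by
  obtain ⟨r, hr⟩ := hv
  obtain ⟨x₀, rfl⟩ := IsLocalRing.residue_surjective r
  refine isSquare_of_norm_sub_sq_lt_one h2 (x₀ := x₀)
    (Valued.integer.norm_eq_one_of_residue_ne_zero fun h => hv0 (by simp [hr, h])) ?_
  have : IsLocalRing.residue 𝒪[K] (v - x₀ ^ 2) = 0 := by simp [hr, sq]
  simpa using Valued.integer.residue_eq_zero_iff.mp this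

theorem exists_sq_sub_mul_sq_eq [ProperSpace K] (h2 : ‖(2 : K)‖ = 1) {u w : K}
    (hu : ‖u‖ = 1) (hw : ‖w‖ = 1) : ∃ a b : K, a ^ 2 - u * b ^ 2 = w := by
  let uO : 𝒪[K] := ⟨u, Valued.integer.mem_iff.mpr hu.le⟩
  let wO : 𝒪[K] := ⟨w, Valued.integer.mem_iff.mpr hw.le⟩
  set ρ := IsLocalRing.residue 𝒪[K]
  have huO : ρ uO ≠ 0 := by
    rw [ne_eq, Valued.integer.residue_eq_zero_iff]; simp [uO, hu]
  have hwO : ρ wO ≠ 0 := by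
    rw [ne_eq, Valued.integer.residue_eq_zero_iff]; simp [wO, hw]
  have := Valued.integer.finite_residueField (K := K)
  obtain ⟨a, b, hab⟩ := FiniteField.exists_sq_sub_mul_sq_eq
    (Valued.integer.ringChar_residueField_ne_two h2) huO (ρ wO)
  obtain ⟨b, rfl⟩ := IsLocalRing.residue_surjective b
  by_cases ha : a = 0
  · -- `a²` has no unit lift, but `-w u ≡ (u b)²` does, and `w = -u (c / u)²` for `c² = -w u`
    subst ha
    obtain ⟨c, hc⟩ := isSquare_of_isSquare_residue h2 (v := -(wO * uO))
      ⟨ρ (uO * b), by simp only [map_neg, map_mul]; linear_combination ρ uO * hab⟩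
      (by rw [map_neg, map_mul]; exact neg_ne_zero.mpr (mul_ne_zero hwO huO))
    have hu0 : u ≠ 0 := norm_ne_zero_iff.mp (by simp [hu])
    refine ⟨0, c / u, ?_⟩
    simp only [uO, wO, Subring.coe_neg, Subring.coe_mul] at hc
    field_simp
    linear_combination hc
  · have hsq : ρ (wO + uO * b ^ 2) = a * a := by
      simp only [map_add, map_mul, map_pow]; linear_combination -hab
    obtain ⟨c, hc⟩ := isSquare_of_isSquare_residue h2 ⟨a, hsq⟩
      (by rw [hsq]; exact mul_ne_zero ha ha)
    refine ⟨c, b, ?_⟩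
    simp only [uO, wO, Subring.coe_add, Subring.coe_mul, Subring.coe_pow] at hc
    linear_combination -hc

end LocalField

theorem Matrix.mul_map_transpose_eq_smul_one {E : Type*} [CommRing E] (σ : E →+* E) {y : E}
    (hy : σ (σ y) = y) :
    !![1, y; -σ y, 1] * (!![1, y; -σ y, 1].map σ).transpose =
      (1 + y * σ y) • (1 : Matrix (Fin 2) (Fin 2) E) := by
  ext i j
  fin_cases i <;> fin_cases j <;> simp [Matrix.mul_apply, hy]; ring

section PadicExtension

variable {p : ℕ} [Fact p.Prime] {F : Type*} [NormedField F] [Algebra ℚ_[p] F]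

theorem isUltrametricDist_of_norm_algebraMap
    (hF : ∀ q : ℚ_[p], ‖algebraMap ℚ_[p] F q‖ = ‖q‖) : IsUltrametricDist F :=
  IsUltrametricDist.isUltrametricDist_of_forall_norm_natCast_le_one fun n => by
    rw [← map_natCast (algebraMap ℚ_[p] F), hF]
    exact_mod_cast Padic.norm_int_le_one (p := p) n

theorem norm_two_of_norm_algebraMap (hp : p ≠ 2)
    (hF : ∀ q : ℚ_[p], ‖algebraMap ℚ_[p] F q‖ = ‖q‖) : ‖(2 : F)‖ = 1 := by
  have h := hF (2 : ℕ)
  rw [map_natCast, Padic.norm_natCast_eq_one_iff.mpr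
    ((Nat.coprime_primes Fact.out Nat.prime_two).mpr hp)] at h
  exact_mod_cast h

end PadicExtension

theorem stmt8_general (p : ℕ) [Fact (Nat.Prime p)] (hp : p ≠ 2)
    (F : Type*) [NormedField F] [Algebra ℚ_[p] F] [FiniteDimensional ℚ_[p] F]
    (hFnorm : ∀ q : ℚ_[p], ‖algebraMap ℚ_[p] F q‖ = ‖q‖)
    -- `u` is a non-square unit
    (u : F) (hu_unit : ‖u‖ = 1)
    -- `π` is a uniformizer
    (π : F) (hπ0 : π ≠ 0) (hπlt : ‖π‖ < 1)
    -- `E = F(√u)` with conjugation `σ`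
    (E : Type*) [Field E] [Algebra F E]
    (s : E) (hs : s ^ 2 = algebraMap F E u)
    (σ : E ≃ₐ[F] E) (hσ : σ s = -s) :
    ∃ g : Matrix (Fin 2) (Fin 2) E, IsUnit g ∧
      g * (g.map fun x => σ x).transpose
        = algebraMap F E π • (1 : Matrix (Fin 2) (Fin 2) E) := by
  let _ : NormedSpace ℚ_[p] F := ⟨fun q x => by rw [Algebra.smul_def, norm_mul, hFnorm]⟩
  have := isUltrametricDist_of_norm_algebraMap hFnorm
  let _ : NontriviallyNormedField F := .ofNormNeOne ⟨π, hπ0, hπlt.ne⟩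
  have := FiniteDimensional.proper ℚ_[p] F
  have hπ1 : ‖π - 1‖ = 1 := by
    simpa [← sub_eq_add_neg, hπlt.le] using IsUltrametricDist.norm_add_eq_max_of_norm_ne_norm
      (x := π) (y := -1) (by simpa using hπlt.ne)
  obtain ⟨a, b, hab⟩ :=
    exists_sq_sub_mul_sq_eq (norm_two_of_norm_algebraMap hp hFnorm) hu_unit hπ1
  set y := algebraMap F E a + algebraMap F E b * s
  have hσy : σ y = algebraMap F E a - algebraMap F E b * s := by
    simp [y, hσ, sub_eq_add_neg]
  have hy : 1 + y * σ y = algebraMap F E π := by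
    have h := congrArg (algebraMap F E) hab
    simp only [map_sub, map_mul, map_pow, map_one, ← hs] at h
    rw [hσy]
    linear_combination h
  refine ⟨!![1, y; -σ y, 1], ?_, ?_⟩
  · rw [Matrix.isUnit_iff_isUnit_det, Matrix.det_fin_two_of, isUnit_iff_ne_zero]
    convert (map_ne_zero (algebraMap F E)).mpr hπ0 using 1
    rw [← hy]
    ring
  · rw [← hy]
    exact Matrix.mul_map_transpose_eq_smul_one σ.toRingHom (by simp [hσy, hσ, y])

/-- Let `F` be a finite extension of `ℚ_p` (`p` odd) with its canonical absolute value,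
`u` a non-square unit, `π` a uniformizer, and `E = F(√u)` the unramified quadratic extension
with Galois conjugation `σ`. Then there exists `g ∈ GL(2, E)` with `g · ᵗḡ = π · I₂`. -/
theorem stmt8 (p : ℕ) [Fact (Nat.Prime p)] (hp : p ≠ 2)
    (F : Type*) [NormedField F] [Algebra ℚ_[p] F] [FiniteDimensional ℚ_[p] F]
    (hFnorm : ∀ q : ℚ_[p], ‖algebraMap ℚ_[p] F q‖ = ‖q‖)
    -- `u` is a non-square unit
    (u : F) (hu_unit : ‖u‖ = 1) (hu_nonsq : ¬ ∃ c : F, u = c ^ 2)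
    -- `π` is a uniformizer
    (π : F) (hπ0 : π ≠ 0) (hπlt : ‖π‖ < 1)
    (hπmax : ∀ x : F, x ≠ 0 → ‖x‖ < 1 → ‖x‖ ≤ ‖π‖)
    -- `E = F(√u)` with conjugation `σ`
    (E : Type*) [Field E] [Algebra F E]
    (s : E) (hs : s ^ 2 = algebraMap F E u)
    (hgen : ∀ x : E, ∃ a b : F, x = algebraMap F E a + algebraMap F E b * s)
    (σ : E ≃ₐ[F] E) (hσ : σ s = -s) :
    ∃ g : Matrix (Fin 2) (Fin 2) E, IsUnit g ∧
      g * (g.map fun x => σ x).transpose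
        = algebraMap F E π • (1 : Matrix (Fin 2) (Fin 2) E) :=
  stmt8_general p hp F hFnorm u hu_unit π hπ0 hπlt E s hs σ hσ
end

section
/- Let F be a p-adic field with residue characteristic ≠ 2, u a non-square unit, π a uniformizer, E = F(√u), J_π = [[0, π],[1, 0]], and S⁺ = {X ∈ M(2,E) : ᵗX = X and J_π X̄ = X ᵗJ_π} = {[[π x̄, μ],[μ, x]] : x ∈ E, μ ∈ F}. If M ∈ M(2, E) and ν ∈ E* satisfy M X ᵗM = ν X for all X ∈ S⁺, then there exists a ∈ E* such that ν = a² and M = a·I₂. -/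
/-!
Every `X = [[π x̄, μ], [μ, x]]` lies in `S⁺`. Test the hypothesis on `diag(π, 1)`,
`diag(-π s, s) = s · diag(-π, 1)` and `[[0, 1], [1, 0]]`, where `s = √u` satisfies
`s̄ = -s` and is nonzero because `u` is not a square. For `M = [[a, b], [c, d]]` this gives
`π a² ± b² = ± ν π`, `± π c² + d² = ν` and `a d + b c = ν`. As `2 ≠ 0` and
`π ≠ 0`, these force `b = c = 0` and `a² = d² = a d = ν`, hence `(d - a)² = 0` and
`M = a · I₂`.
-/

/-- The matrix `J_c = [[0, c],[1, 0]]`. -/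
def Jmat {E : Type*} [Ring E] (c : E) : Matrix (Fin 2) (Fin 2) E :=
  !![0, c; 1, 0]

open Matrix

theorem Matrix.exists_eq_smul_one_of_mul_mul_transpose {K : Type*} [CommRing K] [NoZeroDivisors K]
    (h2 : (2 : K) ≠ 0) {P ν : K} (hP : P ≠ 0) {M : Matrix (Fin 2) (Fin 2) K}
    (hpos : M * !![P, 0; 0, 1] * Mᵀ = ν • !![P, 0; 0, 1])
    (hneg : M * !![-P, 0; 0, 1] * Mᵀ = ν • !![-P, 0; 0, 1])
    (hanti : M * !![0, 1; 1, 0] * Mᵀ = ν • !![0, 1; 1, 0]) :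
    ∃ a, ν = a ^ 2 ∧ M = a • 1 := by
  obtain ⟨a, b, c, d, rfl⟩ : ∃ a b c d, M = !![a, b; c, d] := ⟨_, _, _, _, eta_fin_two M⟩
  have pos₀ : a * P * a + b * b = ν * P := by
    simpa [mul_apply, Fin.sum_univ_two] using congr_fun₂ hpos 0 0
  have pos₁ : c * P * c + d * d = ν := by
    simpa [mul_apply, Fin.sum_univ_two] using congr_fun₂ hpos 1 1
  have neg₀ : -(a * P * a) + b * b = -(ν * P) := by
    simpa [mul_apply, Fin.sum_univ_two] using congr_fun₂ hneg 0 0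
  have neg₁ : -(c * P * c) + d * d = ν := by
    simpa [mul_apply, Fin.sum_univ_two] using congr_fun₂ hneg 1 1
  have anti : b * c + a * d = ν := by
    simpa [mul_apply, Fin.sum_univ_two] using congr_fun₂ hanti 0 1
  have hb : b = 0 := by
    have : 2 * b ^ 2 = 0 := by linear_combination pos₀ + neg₀
    simpa [h2] using this
  have hc : c = 0 := by
    have : 2 * P * c ^ 2 = 0 := by linear_combination pos₁ - neg₁
    simpa [h2, hP] using this
  have ha : a ^ 2 = ν := by
    have : P * (a ^ 2 - ν) = 0 := by linear_combination pos₀ - b * hb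
    simpa [hP, sub_eq_zero] using this
  have hd : d = a := by
    have : (d - a) ^ 2 = 0 := by
      linear_combination pos₁ - 2 * anti + ha - P * c * hc + 2 * b * hc
    simpa [sub_eq_zero] using this
  refine ⟨a, ha.symm, ?_⟩
  rw [hb, hc, hd]
  ext i j
  fin_cases i <;> fin_cases j <;> simp

theorem Jmat_mul_map_eq_mul_transpose {R E : Type*} [CommSemiring R] [CommRing E] [Algebra R E]
    (σ : E ≃ₐ[R] E) {c m x : E} (hc : σ c = c) (hm : σ m = m) (hx : σ (σ x) = x) :
    Jmat c * (!![c * σ x, m; m, x].map fun y => σ y) = !![c * σ x, m; m, x] * (Jmat c)ᵀ := by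
  ext i j
  fin_cases i <;> fin_cases j <;> simp [Jmat, mul_apply, Fin.sum_univ_two, hc, hm, hx, mul_comm]

theorem stmt10_general (p : ℕ) [Fact (Nat.Prime p)]
    (F : Type*) [NormedField F] [Algebra ℚ_[p] F]
    (u : F) (hu_nonsq : ¬ ∃ c : F, u = c ^ 2)
    (π : F) (hπ0 : π ≠ 0)
    (E : Type*) [Field E] [Algebra F E]
    (s : E) (hs : s ^ 2 = algebraMap F E u)
    (σ : E ≃ₐ[F] E) (hσ : σ s = -s)
    (M : Matrix (Fin 2) (Fin 2) E) (ν : E) (hν : ν ≠ 0)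
    (hM : ∀ X : Matrix (Fin 2) (Fin 2) E,
      X.transpose = X →
      Jmat (algebraMap F E π) * (X.map fun x => σ x) = X * (Jmat (algebraMap F E π)).transpose →
      M * X * M.transpose = ν • X) :
    ∃ a : E, a ≠ 0 ∧ ν = a ^ 2 ∧ M = a • (1 : Matrix (Fin 2) (Fin 2) E) := by
  have h2 : (2 : E) ≠ 0 := by
    have : CharZero F := charZero_of_injective_algebraMap (algebraMap ℚ_[p] F).injective
    have : CharZero E := charZero_of_injective_algebraMap (algebraMap F E).injective
    exact two_ne_zero
  have hs0 : s ≠ 0 := by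
    rintro rfl
    exact hu_nonsq ⟨0, (algebraMap F E).injective (by simpa using hs.symm)⟩
  set P := algebraMap F E π
  have hS (m x : E) (hm : σ m = m) (hx : σ (σ x) = x) :
      M * !![P * σ x, m; m, x] * Mᵀ = ν • !![P * σ x, m; m, x] :=
    hM !![P * σ x, m; m, x] (by ext i j; fin_cases i <;> fin_cases j <;> rfl)
      (Jmat_mul_map_eq_mul_transpose σ (AlgEquiv.commutes σ π) hm hx)
  have hneg : M * !![-P, 0; 0, 1] * Mᵀ = ν • !![-P, 0; 0, 1] := by
    have hdiag : !![P * σ s, 0; 0, s] = s • !![-P, 0; 0, 1] := by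
      ext i j; fin_cases i <;> fin_cases j <;> simp [hσ, mul_comm]
    have h := hS 0 s (map_zero σ) (by rw [hσ, map_neg, hσ, neg_neg])
    rw [hdiag, Matrix.mul_smul, Matrix.smul_mul, smul_comm ν s] at h
    exact smul_right_injective _ hs0 h
  obtain ⟨a, rfl, rfl⟩ := exists_eq_smul_one_of_mul_mul_transpose h2 ((map_ne_zero _).mpr hπ0)
    (by simpa using hS 0 1 (map_zero σ) (by simp)) hneg
    (by simpa using hS 1 0 (map_one σ) (by simp))
  exact ⟨a, by simpa using hν, rfl, rfl⟩

/-- Let `F` be a `p`-adic field (`p` odd), `u` a non-square unit, `π` a uniformizer,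
`E = F(√u)` with conjugation `σ`, and
`S⁺ = {X ∈ M(2,E) : ᵗX = X, J_π X̄ = X ᵗJ_π}`. If `M ∈ M(2,E)` and `ν ∈ E*` satisfy
`M X ᵗM = ν X` for all `X ∈ S⁺`, then `ν = a²` and `M = a·I₂` for some `a ∈ E*`. -/
theorem stmt10 (p : ℕ) [Fact (Nat.Prime p)] (hp : p ≠ 2)
    (F : Type*) [NormedField F] [Algebra ℚ_[p] F] [FiniteDimensional ℚ_[p] F]
    (hFnorm : ∀ q : ℚ_[p], ‖algebraMap ℚ_[p] F q‖ = ‖q‖)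
    (u : F) (hu_unit : ‖u‖ = 1) (hu_nonsq : ¬ ∃ c : F, u = c ^ 2)
    (π : F) (hπ0 : π ≠ 0) (hπlt : ‖π‖ < 1)
    (hπmax : ∀ x : F, x ≠ 0 → ‖x‖ < 1 → ‖x‖ ≤ ‖π‖)
    (E : Type*) [Field E] [Algebra F E]
    (s : E) (hs : s ^ 2 = algebraMap F E u)
    (hgen : ∀ x : E, ∃ a b : F, x = algebraMap F E a + algebraMap F E b * s)
    (σ : E ≃ₐ[F] E) (hσ : σ s = -s)
    (M : Matrix (Fin 2) (Fin 2) E) (ν : E) (hν : ν ≠ 0)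
    (hM : ∀ X : Matrix (Fin 2) (Fin 2) E,
      X.transpose = X →
      Jmat (algebraMap F E π) * (X.map fun x => σ x) = X * (Jmat (algebraMap F E π)).transpose →
      M * X * M.transpose = ν • X) :
    ∃ a : E, a ≠ 0 ∧ ν = a ^ 2 ∧ M = a • (1 : Matrix (Fin 2) (Fin 2) E) :=
  stmt10_general p F u hu_nonsq π hπ0 E s hs σ hσ M ν hν hM
end

section
/- Let g̃ be a finite-dimensional semisimple Lie algebra over a field of characteristic 0, with a short ℤ-grading g̃ = V⁻ ⊕ 𝔤 ⊕ V⁺ by ad H₀ (eigenvalues -2, 0, 2) and V⁺, V⁻ abelian. Then g̃' = V⁻ ⊕ [V⁻, V⁺] ⊕ V⁺ is an ideal of g̃, and the direct complement with respect to the Killing form is an ideal contained in 𝔤 acting trivially on V⁺ and V⁻. -/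
/-!
`V⁻ ⊕ [V⁻, V⁺] ⊕ V⁺` is stable under bracketing with each of `V⁻`, `𝔤`, `V⁺` (Jacobi identity
together with `[V^±, V^±] = 0`), so it is an ideal `I`. By Cartan's criterion the Killing form is
nondegenerate, so the Killing complement `J` of `I` is an ideal with `L = I ⊕ J`, and
`[J, I] ⊆ I ∩ J = 0`. Being `ad H₀`-stable, `J` contains the `±2`-components of its elements;
these lie in `V^± ⊆ I`, hence vanish, and `J ⊆ 𝔤`.
-/

def orthKilling (F : Type*) [Field F] (L : Type*) [LieRing L] [LieAlgebra F L]
    [Module.Finite F L] (S : Submodule F L) : Submodule F L where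
  carrier := {x : L | ∀ y ∈ S, killingForm F L x y = 0}
  add_mem' := by
    intro a b ha hb y hy
    rw [map_add, LinearMap.add_apply, ha y hy, hb y hy, add_zero]
  zero_mem' := by
    intro y hy
    simp
  smul_mem' := by
    intro c a ha y hy
    rw [map_smul, LinearMap.smul_apply, ha y hy, smul_zero]

section BracketSpan

variable {R L : Type*} [CommRing R] [LieRing L] [LieAlgebra R L]

def bracketSpan (A B : Submodule R L) : Submodule R L :=
  Submodule.span R {z : L | ∃ x ∈ A, ∃ y ∈ B, z = ⁅x, y⁆}

theorem lie_mem_bracketSpan {A B : Submodule R L} {x y : L} (hx : x ∈ A) (hy : y ∈ B) :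
    ⁅x, y⁆ ∈ bracketSpan A B :=
  Submodule.subset_span ⟨x, hx, y, hy, rfl⟩

theorem lie_mem_of_mem_bracketSpan {A B M : Submodule R L} {x c : L}
    (h : ∀ u ∈ A, ∀ v ∈ B, ⁅x, ⁅u, v⁆⁆ ∈ M) (hc : c ∈ bracketSpan A B) : ⁅x, c⁆ ∈ M := by
  refine (Submodule.span_le (p := M.comap (LieAlgebra.ad R L x))).mpr ?_ hc
  rintro _ ⟨u, hu, v, hv, rfl⟩
  exact h u hu v hv

theorem lie_mem_of_lie_mem_swap {M : Submodule R L} {x y : L} (h : ⁅y, x⁆ ∈ M) :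
    ⁅x, y⁆ ∈ M := by
  rw [← lie_skew]
  exact neg_mem h

end BracketSpan

section ShortGrading

variable {R L : Type*} [CommRing R] [LieRing L] [LieAlgebra R L] {Vm g Vp : Submodule R L}

theorem lie_mem_left_of_mem_bracketSpan (hgm : ∀ x ∈ g, ∀ y ∈ Vm, ⁅x, y⁆ ∈ Vm)
    (hmp : ∀ x ∈ Vm, ∀ y ∈ Vp, ⁅x, y⁆ ∈ g) (hmm : ∀ x ∈ Vm, ∀ y ∈ Vm, ⁅x, y⁆ = 0)
    {x c : L} (hx : x ∈ Vm) (hc : c ∈ bracketSpan Vm Vp) : ⁅x, c⁆ ∈ Vm := by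
  refine lie_mem_of_mem_bracketSpan (fun u hu v hv => ?_) hc
  rw [leibniz_lie, hmm x hx u hu, zero_lie, zero_add]
  exact lie_mem_of_lie_mem_swap (hgm _ (hmp x hx v hv) u hu)

theorem lie_mem_right_of_mem_bracketSpan (hgp : ∀ x ∈ g, ∀ y ∈ Vp, ⁅x, y⁆ ∈ Vp)
    (hmp : ∀ x ∈ Vm, ∀ y ∈ Vp, ⁅x, y⁆ ∈ g) (hpp : ∀ x ∈ Vp, ∀ y ∈ Vp, ⁅x, y⁆ = 0)
    {x c : L} (hx : x ∈ Vp) (hc : c ∈ bracketSpan Vm Vp) : ⁅x, c⁆ ∈ Vp := by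
  refine lie_mem_of_mem_bracketSpan (fun u hu v hv => ?_) hc
  rw [leibniz_lie, hpp x hx v hv, lie_zero, add_zero]
  exact hgp _ (lie_mem_of_lie_mem_swap (hmp u hu x hx)) v hv

theorem lie_mem_bracketSpan_of_mem_bracketSpan (hgp : ∀ x ∈ g, ∀ y ∈ Vp, ⁅x, y⁆ ∈ Vp)
    (hgm : ∀ x ∈ g, ∀ y ∈ Vm, ⁅x, y⁆ ∈ Vm) {x c : L} (hx : x ∈ g)
    (hc : c ∈ bracketSpan Vm Vp) : ⁅x, c⁆ ∈ bracketSpan Vm Vp := by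
  refine lie_mem_of_mem_bracketSpan (fun u hu v hv => ?_) hc
  rw [leibniz_lie]
  exact add_mem (lie_mem_bracketSpan (hgm x hx u hu) hv) (lie_mem_bracketSpan hu (hgp x hx v hv))

theorem lie_mem_sup_bracketSpan_sup (hsum : Vm ⊔ g ⊔ Vp = ⊤)
    (hgp : ∀ x ∈ g, ∀ y ∈ Vp, ⁅x, y⁆ ∈ Vp) (hgm : ∀ x ∈ g, ∀ y ∈ Vm, ⁅x, y⁆ ∈ Vm)
    (hmp : ∀ x ∈ Vm, ∀ y ∈ Vp, ⁅x, y⁆ ∈ g)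
    (hpp : ∀ x ∈ Vp, ∀ y ∈ Vp, ⁅x, y⁆ = 0) (hmm : ∀ x ∈ Vm, ∀ y ∈ Vm, ⁅x, y⁆ = 0)
    (x : L) {y : L} (hy : y ∈ Vm ⊔ bracketSpan Vm Vp ⊔ Vp) :
    ⁅x, y⁆ ∈ Vm ⊔ bracketSpan Vm Vp ⊔ Vp := by
  set S := Vm ⊔ bracketSpan Vm Vp ⊔ Vp
  have hVm : Vm ≤ S := le_sup_left.trans le_sup_left
  have hP : bracketSpan Vm Vp ≤ S := le_sup_right.trans le_sup_left
  have hVp : Vp ≤ S := le_sup_right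
  have hneg : ∀ a ∈ Vm, S ≤ S.comap (LieAlgebra.ad R L a) := fun a ha =>
    sup_le (sup_le (fun u hu => show ⁅a, u⁆ ∈ S by rw [hmm a ha u hu]; exact zero_mem S)
      (fun c hc => hVm (lie_mem_left_of_mem_bracketSpan hgm hmp hmm ha hc)))
      (fun w hw => hP (lie_mem_bracketSpan ha hw))
  have hzero : ∀ h ∈ g, S ≤ S.comap (LieAlgebra.ad R L h) := fun h hh =>
    sup_le (sup_le (fun u hu => hVm (hgm h hh u hu))
      (fun c hc => hP (lie_mem_bracketSpan_of_mem_bracketSpan hgp hgm hh hc)))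
      (fun w hw => hVp (hgp h hh w hw))
  have hpos : ∀ b ∈ Vp, S ≤ S.comap (LieAlgebra.ad R L b) := fun b hb =>
    sup_le (sup_le (fun u hu => hP (lie_mem_of_lie_mem_swap (lie_mem_bracketSpan hu hb)))
      (fun c hc => hVp (lie_mem_right_of_mem_bracketSpan hgp hmp hpp hb hc)))
      (fun w hw => show ⁅b, w⁆ ∈ S by rw [hpp b hb w hw]; exact zero_mem S)
  have hx : x ∈ Vm ⊔ g ⊔ Vp := hsum ▸ Submodule.mem_top
  obtain ⟨x', hx', b, hb, rfl⟩ := Submodule.mem_sup.mp hx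
  obtain ⟨a, ha, h, hh, rfl⟩ := Submodule.mem_sup.mp hx'
  rw [add_lie, add_lie]
  exact add_mem (add_mem (hneg a ha hy) (hzero h hh hy)) (hpos b hb hy)

end ShortGrading

theorem LieIdeal.lie_eq_zero_of_disjoint {R L : Type*} [CommRing R] [LieRing L] [LieAlgebra R L]
    {I J : LieIdeal R L} (hIJ : Disjoint I J) {x y : L} (hx : x ∈ I) (hy : y ∈ J) :
    ⁅x, y⁆ = 0 :=
  (LieSubmodule.mem_bot _).mp <| hIJ.le_bot <|
    (LieSubmodule.mem_inf _ _ _).mpr ⟨lie_mem_left R L I x y hx, J.lie_mem hy⟩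

theorem orthKilling_eq_killingCompl {K L : Type*} [Field K] [LieRing L] [LieAlgebra K L]
    [Module.Finite K L] (I : LieIdeal K L) :
    orthKilling K L (LieSubmodule.toSubmodule I) = LieSubmodule.toSubmodule I.killingCompl := by
  ext x
  rw [LieSubmodule.mem_toSubmodule, LieIdeal.mem_killingCompl]
  exact forall₂_congr fun y _ => by rw [LieModule.traceForm_comm]

theorem Submodule.mem_of_add_add_mem_of_apply_eq_smul {F V : Type*} [Field F] [AddCommGroup V]
    [Module F V] (h2 : (2 : F) ≠ 0) {f : Module.End F V} {T : Submodule F V}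
    (hT : ∀ v ∈ T, f v ∈ T) {a h b : V} (ha : f a = (-2 : F) • a) (hh : f h = 0)
    (hb : f b = (2 : F) • b) (hx : a + h + b ∈ T) : a ∈ T ∧ b ∈ T := by
  have h8 : (8 : F) ≠ 0 := by
    have : (8 : F) = 2 ^ 3 := by norm_num
    exact this ▸ pow_ne_zero 3 h2
  have hfx : f (a + h + b) = (-2 : F) • a + (2 : F) • b := by
    rw [map_add, map_add, ha, hh, hb, add_zero]
  have hffx : f (f (a + h + b)) = (4 : F) • a + (4 : F) • b := by
    rw [hfx, map_add, map_smul, map_smul, ha, hb, smul_smul, smul_smul]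
    norm_num
  have hf1 := hT _ hx
  have hf2 := hT _ hf1
  constructor
  · have : (8 : F) • a = f (f (a + h + b)) - (2 : F) • f (a + h + b) := by
      rw [hffx, hfx]; module
    exact (T.smul_mem_iff h8).mp (this ▸ T.sub_mem hf2 (T.smul_mem _ hf1))
  · have : (8 : F) • b = f (f (a + h + b)) + (2 : F) • f (a + h + b) := by
      rw [hffx, hfx]; module
    exact (T.smul_mem_iff h8).mp (this ▸ T.add_mem hf2 (T.smul_mem _ hf1))

theorem LieIdeal.toSubmodule_le_of_disjoint_of_grading {F L : Type*} [Field F] [LieRing L]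
    [LieAlgebra F L] (h2 : (2 : F) ≠ 0) {Vm g Vp S : Submodule F L} {H₀ : L}
    (heigp : ∀ x ∈ Vp, ⁅H₀, x⁆ = (2 : F) • x) (heig0 : ∀ x ∈ g, ⁅H₀, x⁆ = 0)
    (heigm : ∀ x ∈ Vm, ⁅H₀, x⁆ = (-2 : F) • x) (hsum : Vm ⊔ g ⊔ Vp = ⊤)
    (hVm : Vm ≤ S) (hVp : Vp ≤ S) {J : LieIdeal F L}
    (hSJ : Disjoint S (LieSubmodule.toSubmodule J)) : LieSubmodule.toSubmodule J ≤ g := by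
  intro t ht
  have htop : t ∈ Vm ⊔ g ⊔ Vp := hsum ▸ Submodule.mem_top
  obtain ⟨t', ht', b, hb, rfl⟩ := Submodule.mem_sup.mp htop
  obtain ⟨a, ha, h, hh, rfl⟩ := Submodule.mem_sup.mp ht'
  obtain ⟨haJ, hbJ⟩ := Submodule.mem_of_add_add_mem_of_apply_eq_smul h2
    (f := LieAlgebra.ad F L H₀) (fun v hv => J.lie_mem hv) (heigm a ha) (heig0 h hh)
    (heigp b hb) ht
  rw [(Submodule.disjoint_def.mp hSJ) a (hVm ha) haJ,
    (Submodule.disjoint_def.mp hSJ) b (hVp hb) hbJ, zero_add, add_zero]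
  exact hh

theorem stmt19_general (F : Type*) [Field F] [CharZero F]
    (L : Type*) [LieRing L] [LieAlgebra F L] [Module.Finite F L]
    [LieAlgebra.IsSemisimple F L]
    (Vm g Vp : Submodule F L) (H₀ : L)
    (heigp : ∀ x ∈ Vp, ⁅H₀, x⁆ = (2 : F) • x)
    (heig0 : ∀ x ∈ g, ⁅H₀, x⁆ = 0)
    (heigm : ∀ x ∈ Vm, ⁅H₀, x⁆ = (-2 : F) • x)
    (hsum : Vm ⊔ g ⊔ Vp = ⊤)
    (hgp : ∀ x ∈ g, ∀ y ∈ Vp, ⁅x, y⁆ ∈ Vp)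
    (hgm : ∀ x ∈ g, ∀ y ∈ Vm, ⁅x, y⁆ ∈ Vm)
    (hmp : ∀ x ∈ Vm, ∀ y ∈ Vp, ⁅x, y⁆ ∈ g)
    (hpp : ∀ x ∈ Vp, ∀ y ∈ Vp, ⁅x, y⁆ = 0)
    (hmm : ∀ x ∈ Vm, ∀ y ∈ Vm, ⁅x, y⁆ = 0) :
    let S : Submodule F L :=
      Vm ⊔ Submodule.span F {z : L | ∃ x ∈ Vm, ∃ y ∈ Vp, z = ⁅x, y⁆} ⊔ Vp
    -- `S = V⁻ ⊕ [V⁻, V⁺] ⊕ V⁺` is an ideal of `g̃`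
    (∀ x : L, ∀ y ∈ S, ⁅x, y⁆ ∈ S) ∧
    -- its Killing-orthogonal complement is an ideal …
    (∀ x : L, ∀ y ∈ orthKilling F L S, ⁅x, y⁆ ∈ orthKilling F L S) ∧
    -- … contained in `g` …
    (orthKilling F L S ≤ g) ∧
    -- … acting trivially on `V⁺` and `V⁻` …
    (∀ x ∈ orthKilling F L S, (∀ v ∈ Vp, ⁅x, v⁆ = 0) ∧ (∀ v ∈ Vm, ⁅x, v⁆ = 0)) ∧
    -- … and it is a direct complement of `S`
    (S ⊓ orthKilling F L S = ⊥) ∧ (S ⊔ orthKilling F L S = ⊤) := by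
  intro S
  let I : LieIdeal F L :=
    { toSubmodule := S
      lie_mem := fun {x _} hy => lie_mem_sup_bracketSpan_sup hsum hgp hgm hmp hpp hmm x hy }
  have hT : orthKilling F L S = LieSubmodule.toSubmodule I.killingCompl :=
    orthKilling_eq_killingCompl I
  have hcompl : IsCompl S (LieSubmodule.toSubmodule I.killingCompl) :=
    LieSubmodule.isCompl_toSubmodule.mpr I.isCompl_killingCompl
  have hVm : Vm ≤ S := le_sup_left.trans le_sup_left
  have hVp : Vp ≤ S := le_sup_right
  have hcomm {x v : L} (hx : x ∈ I.killingCompl) (hv : v ∈ S) : ⁅x, v⁆ = 0 :=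
    LieIdeal.lie_eq_zero_of_disjoint I.isCompl_killingCompl.disjoint.symm hx hv
  rw [hT]
  exact ⟨fun x _ hy => I.lie_mem hy, fun x _ hy => I.killingCompl.lie_mem hy,
    LieIdeal.toSubmodule_le_of_disjoint_of_grading two_ne_zero heigp heig0 heigm hsum hVm hVp
      hcompl.disjoint,
    fun x hx => ⟨fun v hv => hcomm hx (hVp hv), fun v hv => hcomm hx (hVm hv)⟩,
    hcompl.inf_eq_bot, hcompl.sup_eq_top⟩

/-- Let `g̃ = V⁻ ⊕ g ⊕ V⁺` be a short ℤ-graded semisimple Lie algebra over a field of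
characteristic 0, with `V⁺, V⁻` abelian. Then `g̃' = V⁻ ⊕ [V⁻, V⁺] ⊕ V⁺` is an ideal of `g̃`,
and its orthogonal complement for the Killing form is a direct complement which is an ideal
contained in `g` acting trivially on `V⁺` and `V⁻`. -/
theorem stmt19 (F : Type*) [Field F] [CharZero F]
    (L : Type*) [LieRing L] [LieAlgebra F L] [Module.Finite F L]
    [LieAlgebra.IsSemisimple F L]
    (Vm g Vp : Submodule F L) (H₀ : L) (hH₀ : H₀ ∈ g)
    (heigp : ∀ x ∈ Vp, ⁅H₀, x⁆ = (2 : F) • x)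
    (heig0 : ∀ x ∈ g, ⁅H₀, x⁆ = 0)
    (heigm : ∀ x ∈ Vm, ⁅H₀, x⁆ = (-2 : F) • x)
    (hsum : Vm ⊔ g ⊔ Vp = ⊤)
    (hgp : ∀ x ∈ g, ∀ y ∈ Vp, ⁅x, y⁆ ∈ Vp)
    (hgm : ∀ x ∈ g, ∀ y ∈ Vm, ⁅x, y⁆ ∈ Vm)
    (hgg : ∀ x ∈ g, ∀ y ∈ g, ⁅x, y⁆ ∈ g)
    (hmp : ∀ x ∈ Vm, ∀ y ∈ Vp, ⁅x, y⁆ ∈ g)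
    (hpp : ∀ x ∈ Vp, ∀ y ∈ Vp, ⁅x, y⁆ = 0)
    (hmm : ∀ x ∈ Vm, ∀ y ∈ Vm, ⁅x, y⁆ = 0) :
    let S : Submodule F L :=
      Vm ⊔ Submodule.span F {z : L | ∃ x ∈ Vm, ∃ y ∈ Vp, z = ⁅x, y⁆} ⊔ Vp
    -- `S = V⁻ ⊕ [V⁻, V⁺] ⊕ V⁺` is an ideal of `g̃`
    (∀ x : L, ∀ y ∈ S, ⁅x, y⁆ ∈ S) ∧
    -- its Killing-orthogonal complement is an ideal …
    (∀ x : L, ∀ y ∈ orthKilling F L S, ⁅x, y⁆ ∈ orthKilling F L S) ∧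
    -- … contained in `g` …
    (orthKilling F L S ≤ g) ∧
    -- … acting trivially on `V⁺` and `V⁻` …
    (∀ x ∈ orthKilling F L S, (∀ v ∈ Vp, ⁅x, v⁆ = 0) ∧ (∀ v ∈ Vm, ⁅x, v⁆ = 0)) ∧
    -- … and it is a direct complement of `S`
    (S ⊓ orthKilling F L S = ⊥) ∧ (S ⊔ orthKilling F L S = ⊤) :=
  stmt19_general F L Vm g Vp H₀ heigp heig0 heigm hsum hgp hgm hmp hpp hmm
end
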